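/- Suppose n ≥ 3 and k ≥ 3, and let σ_i(s_{-i}) = {(a,b) ∈ [k]×[k] : a < b} for every agent i and every s_{-i} (the orderings induced by value functions strictly increasing in the agent's own signal). Then the truthful polytope T(σ) has an extreme point that is not integral, i.e., some coordinate lies strictly between 0 and 1. -/

import Mathlib

/-!
The non-integral extreme point is the lift of a rule `halfRule` for three agents and three
signals with all shares in `{0, 1/2, 1}`: agents beyond the third get nothing and signals above
`2` are read as `2`. A point of `T(σ)` is extreme as soon as no other point of `T(σ)` satisfies
with equality every constraint that is tight at it. For `halfRule` the tight constraints contain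
a cycle through half-valued coordinates in which consecutive coordinates are alternately equal
(a tight monotonicity constraint) and sum to `1` (the budget constraint, the third agent getting
`0`). The cycle has seven links of the second kind, so its first coordinate `u` satisfies
`u = 1 - u`. A competitor of the lift is reduced to a competitor of `halfRule` by restricting it
along a strictly monotone embedding of the three-agent, three-signal profiles.
-/

namespace Stmt8

variable {n k : ℕ}

/-- Membership in the truthful polytope `T(σ)` where `σ_i(s_{-i})` is the natural strict
order `a < b` on signals, for every agent `i` and every `s_{-i}`. -/
def InT (x : Fin n → (Fin n → Fin k) → ℝ) : Prop :=
  (∀ i s, 0 ≤ x i s ∧ x i s ≤ 1) ∧ (∀ s, ∑ i, x i s = 1) ∧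
  (∀ (i : Fin n) (s : Fin n → Fin k) (a b : Fin k), a < b →
    x i (Function.update s i a) ≤ x i (Function.update s i b))

/-- Together with `InT x`, this says that `x` lies in the smallest face of `T(σ)` containing
`y`. -/
def TightAt (y x : Fin n → (Fin n → Fin k) → ℝ) : Prop :=
  (∀ i s, y i s = 0 → x i s = 0) ∧ (∀ i s, y i s = 1 → x i s = 1) ∧
  (∀ (i : Fin n) (s : Fin n → Fin k) (a b : Fin k), a < b →
    y i (Function.update s i a) = y i (Function.update s i b) →
    x i (Function.update s i a) = x i (Function.update s i b))

lemma eq_of_mul_add_mul_eq {R : Type*} [CommRing R] [LinearOrder R] [IsStrictOrderedRing R]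
    {p q a b a' b' : R} (hp : 0 < p) (hq : 0 < q) (ha : a ≤ a') (hb : b ≤ b')
    (h : p * a + q * b = p * a' + q * b') : a = a' := by
  nlinarith

lemma tightAt_of_mem_openSegment {u v y : Fin n → (Fin n → Fin k) → ℝ} (hu : InT u)
    (hv : InT v) (hy : y ∈ openSegment ℝ u v) : TightAt y u := by
  obtain ⟨p, q, hp, hq, hpq, rfl⟩ := hy
  refine ⟨fun i s h => ?_, fun i s h => ?_, fun i s a b hab h => ?_⟩ <;>
    simp only [Pi.add_apply, Pi.smul_apply, smul_eq_mul] at h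
  · exact (eq_of_mul_add_mul_eq hp hq (hu.1 i s).1 (hv.1 i s).1 (by linarith)).symm
  · exact eq_of_mul_add_mul_eq hp hq (hu.1 i s).2 (hv.1 i s).2 (by linarith)
  · exact eq_of_mul_add_mul_eq hp hq (hu.2.2 i s a b hab) (hv.2.2 i s a b hab) h

lemma mem_extremePoints_of_forall_tightAt {y : Fin n → (Fin n → Fin k) → ℝ} (hy : InT y)
    (h : ∀ x, InT x → TightAt y x → x = y) : y ∈ Set.extremePoints ℝ {x | InT x} :=
  ⟨hy, fun _ hu _ hv huv => h _ hu (tightAt_of_mem_openSegment hu hv huv)⟩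

lemma TightAt.eq_of_update {y x : Fin n → (Fin n → Fin k) → ℝ} (h : TightAt y x) {i : Fin n}
    {s s' : Fin n → Fin k} (hlt : s i < s' i) (hs' : Function.update s i (s' i) = s')
    (hy : y i s = y i s') : x i s = x i s' := by
  have := h.2.2 i s (s i) (s' i) hlt
  rw [Function.update_eq_self, hs'] at this
  exact this hy

lemma sum_eq_sum_castLE {M : Type*} [AddCommMonoid M] {m : ℕ} (hmn : m ≤ n) (f : Fin n → M)
    (hf : ∀ i : Fin n, m ≤ i → f i = 0) : ∑ i, f i = ∑ j : Fin m, f (Fin.castLE hmn j) := by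
  refine (Fintype.sum_of_injective _ (Fin.castLE_injective hmn) _ _ (fun i hi => hf i ?_)
    fun _ => rfl).symm
  by_contra! hlt
  exact hi ⟨⟨i, hlt⟩, rfl⟩

section Lift

variable {m l : ℕ} [NeZero l]

def clamp (v : Fin k) : Fin l := ⟨min v (l - 1), by have := NeZero.pos l; omega⟩

lemma clamp_mono : Monotone (clamp : Fin k → Fin l) := fun a b hab => by
  simp only [clamp, Fin.mk_le_mk]
  exact min_le_min_right _ hab

def lift (hmn : m ≤ n) (z : Fin m → (Fin m → Fin l) → ℝ) : Fin n → (Fin n → Fin k) → ℝ :=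
  fun i s => if h : (i : ℕ) < m then z ⟨i, h⟩ (clamp ∘ s ∘ Fin.castLE hmn) else 0

lemma lift_castLE (hmn : m ≤ n) (z : Fin m → (Fin m → Fin l) → ℝ) (j : Fin m)
    (s : Fin n → Fin k) : lift hmn z (Fin.castLE hmn j) s = z j (clamp ∘ s ∘ Fin.castLE hmn) :=
  dif_pos j.isLt

lemma lift_of_le (hmn : m ≤ n) (z : Fin m → (Fin m → Fin l) → ℝ) {i : Fin n} (hi : m ≤ i)
    (s : Fin n → Fin k) : lift hmn z i s = 0 :=
  dif_neg hi.not_gt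

lemma clamp_comp_update_comp_castLE (hmn : m ≤ n) (s : Fin n → Fin k) (j : Fin m) (a : Fin k) :
    (clamp ∘ Function.update s (Fin.castLE hmn j) a ∘ Fin.castLE hmn : Fin m → Fin l) =
      Function.update (clamp ∘ s ∘ Fin.castLE hmn) j (clamp a) := by
  rw [Function.update_comp_eq_of_injective _ (Fin.castLE_injective hmn), Function.comp_update]

lemma InT.lift (hmn : m ≤ n) {z : Fin m → (Fin m → Fin l) → ℝ} (hz : InT z) :
    InT (lift (k := k) hmn z) := by
  refine ⟨fun i s => ?_, fun s => ?_, fun i s a b hab => ?_⟩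
  · unfold Stmt8.lift
    split_ifs
    exacts [hz.1 _ _, ⟨le_rfl, zero_le_one⟩]
  · rw [sum_eq_sum_castLE hmn _ fun i hi => lift_of_le hmn z hi s]
    simp only [lift_castLE]
    exact hz.2.1 _
  · by_cases hi : (i : ℕ) < m
    · obtain ⟨j, rfl⟩ : ∃ j, Fin.castLE hmn j = i := ⟨⟨i, hi⟩, rfl⟩
      rw [lift_castLE, lift_castLE, clamp_comp_update_comp_castLE,
        clamp_comp_update_comp_castLE]
      rcases (clamp_mono (l := l) hab.le).lt_or_eq with hlt | heq
      · exact hz.2.2 _ _ _ _ hlt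
      · rw [heq]
    · rw [lift_of_le hmn z (not_lt.1 hi), lift_of_le hmn z (not_lt.1 hi)]

section Restrict

variable (hmn : m ≤ n) (hlk : l ≤ k)

def clampSection (v : Fin k) (t : Fin l) : Fin k :=
  if clamp v = t then v else Fin.castLE hlk t

lemma clamp_clampSection (v : Fin k) (t : Fin l) : clamp (clampSection hlk v t) = t := by
  unfold clampSection
  split_ifs with h
  · exact h
  · ext
    simp only [clamp, Fin.val_castLE]
    omega

lemma clampSection_clamp (v : Fin k) : clampSection hlk v (clamp v) = v :=
  if_pos rfl

lemma strictMono_clampSection (v : Fin k) : StrictMono (clampSection hlk v) := fun a b hab => by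
  unfold clampSection
  split_ifs <;> simp only [clamp, Fin.ext_iff, Fin.lt_def, Fin.val_castLE] at * <;> omega

def embedProfile (s : Fin n → Fin k) (t : Fin m → Fin l) : Fin n → Fin k :=
  fun i => if h : (i : ℕ) < m then clampSection hlk (s i) (t ⟨i, h⟩) else s i

lemma embedProfile_clamp (s : Fin n → Fin k) :
    embedProfile hlk s (clamp ∘ s ∘ Fin.castLE hmn) = s := by
  funext i
  unfold embedProfile
  split_ifs
  · exact clampSection_clamp hlk _
  · rfl

lemma clamp_embedProfile (s : Fin n → Fin k) (t : Fin m → Fin l) :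
    clamp ∘ embedProfile hlk s t ∘ Fin.castLE hmn = t := by
  funext j
  simp only [Function.comp_apply, embedProfile, Fin.val_castLE, j.isLt, dif_pos,
    clamp_clampSection]

lemma embedProfile_update (s : Fin n → Fin k) (t : Fin m → Fin l) (j : Fin m) (a : Fin l) :
    embedProfile hlk s (Function.update t j a) =
      Function.update (embedProfile hlk s t) (Fin.castLE hmn j)
        (clampSection hlk (s (Fin.castLE hmn j)) a) := by
  funext i
  by_cases hij : i = Fin.castLE hmn j
  · subst hij
    simp [embedProfile]
  · have hij' : ∀ h : (i : ℕ) < m, (⟨i, h⟩ : Fin m) ≠ j := fun _ h => hij (by simp [← h])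
    simp only [embedProfile, Function.update_of_ne hij]
    split_ifs with hi
    · rw [Function.update_of_ne (hij' hi)]
    · rfl

def restrict (s : Fin n → Fin k) (x : Fin n → (Fin n → Fin k) → ℝ) :
    Fin m → (Fin m → Fin l) → ℝ :=
  fun j t => x (Fin.castLE hmn j) (embedProfile hlk s t)

lemma restrict_lift (s : Fin n → Fin k) (z : Fin m → (Fin m → Fin l) → ℝ) :
    restrict hmn hlk s (lift hmn z) = z := by
  funext j t
  simp only [restrict, lift_castLE, clamp_embedProfile]

lemma InT.restrict {x : Fin n → (Fin n → Fin k) → ℝ} (hx : InT x)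
    (hx0 : ∀ (i : Fin n) s, m ≤ (i : ℕ) → x i s = 0) (s : Fin n → Fin k) :
    InT (restrict hmn hlk s x) := by
  refine ⟨fun j t => hx.1 _ _, fun t => ?_, fun j t a b hab => ?_⟩
  · rw [← hx.2.1 (embedProfile hlk s t), sum_eq_sum_castLE hmn _ fun i hi => hx0 i _ hi]
    rfl
  · simp only [Stmt8.restrict, embedProfile_update hmn]
    exact hx.2.2 _ _ _ _ (strictMono_clampSection hlk _ hab)

lemma TightAt.restrict {y x : Fin n → (Fin n → Fin k) → ℝ} (h : TightAt y x)
    (s : Fin n → Fin k) : TightAt (restrict hmn hlk s y) (restrict hmn hlk s x) := by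
  refine ⟨fun j t => h.1 _ _, fun j t => h.2.1 _ _, fun j t a b hab => ?_⟩
  simp only [Stmt8.restrict, embedProfile_update hmn]
  exact h.2.2 _ _ _ _ (strictMono_clampSection hlk _ hab)

end Restrict

lemma eq_lift_of_tightAt (hmn : m ≤ n) (hlk : l ≤ k) {z : Fin m → (Fin m → Fin l) → ℝ}
    (hz : ∀ w, InT w → TightAt z w → w = z) {x : Fin n → (Fin n → Fin k) → ℝ} (hx : InT x)
    (hxz : TightAt (lift hmn z) x) : x = lift hmn z := by
  have hx0 : ∀ (i : Fin n) s, m ≤ (i : ℕ) → x i s = 0 :=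
    fun i s hi => hxz.1 i s (lift_of_le hmn z hi s)
  funext i s
  by_cases hi : (i : ℕ) < m
  · obtain ⟨j, rfl⟩ : ∃ j, Fin.castLE hmn j = i := ⟨⟨i, hi⟩, rfl⟩
    have hrestrict := hz _ (hx.restrict hmn hlk hx0 s)
      (restrict_lift hmn hlk s z ▸ hxz.restrict hmn hlk s)
    calc x (Fin.castLE hmn j) s
        = restrict hmn hlk s x j (clamp ∘ s ∘ Fin.castLE hmn) := by
          rw [restrict, embedProfile_clamp]
      _ = lift hmn z (Fin.castLE hmn j) s := by rw [hrestrict, lift_castLE]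
  · rw [hx0 i s (not_lt.1 hi), lift_of_le hmn z (not_lt.1 hi)]

end Lift

def halfTable : Fin 3 → Fin 3 → Fin 3 → Fin 3 → ℕ :=
  ![![![![1, 0, 0], ![1, 0, 0], ![0, 0, 0]],
      ![![1, 0, 0], ![1, 1, 0], ![2, 0, 2]],
      ![![1, 0, 0], ![2, 1, 2], ![2, 0, 2]]],
    ![![![1, 2, 2], ![1, 2, 2], ![2, 2, 2]],
      ![![0, 0, 0], ![0, 0, 0], ![0, 2, 0]],
      ![![0, 1, 0], ![0, 1, 0], ![0, 2, 0]]],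
    ![![![0, 0, 0], ![0, 0, 0], ![0, 0, 0]],
      ![![1, 2, 2], ![1, 1, 2], ![0, 0, 0]],
      ![![1, 1, 2], ![0, 0, 0], ![0, 0, 0]]]]

noncomputable def halfRule (i : Fin 3) (s : Fin 3 → Fin 3) : ℝ :=
  halfTable i (s 0) (s 1) (s 2) / 2

lemma halfTable_le_two : ∀ i a b c, halfTable i a b c ≤ 2 := by
  decide

lemma halfTable_sum :
    ∀ a b c, halfTable 0 a b c + halfTable 1 a b c + halfTable 2 a b c = 2 := by
  decide

lemma halfTable_monotone :
    (∀ a a' b c, a ≤ a' → halfTable 0 a b c ≤ halfTable 0 a' b c) ∧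
    (∀ a b b' c, b ≤ b' → halfTable 1 a b c ≤ halfTable 1 a b' c) ∧
    (∀ a b c c', c ≤ c' → halfTable 2 a b c ≤ halfTable 2 a b c') := by
  decide

lemma halfTable_eq_one : ∀ i a b c, halfTable i a b c = 1 →
    (i, a, b, c) ∈ [(0, 0, 0, 0), (1, 0, 0, 0), (0, 0, 1, 0), (1, 0, 1, 0), (0, 1, 0, 0),
      (2, 1, 0, 0), (0, 1, 1, 0), (2, 1, 1, 0), (0, 1, 1, 1), (2, 1, 1, 1), (0, 2, 0, 0),
      (2, 2, 0, 0), (0, 2, 1, 1), (1, 2, 1, 1), (1, 2, 0, 1), (2, 2, 0, 1)] := by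
  decide

lemma inT_halfRule : InT halfRule := by
  refine ⟨fun i s => ⟨by unfold halfRule; positivity, ?_⟩, fun s => ?_, fun i s a b hab => ?_⟩
  · have := halfTable_le_two i (s 0) (s 1) (s 2)
    rw [halfRule, div_le_one two_pos]
    exact_mod_cast this
  · simp only [Fin.sum_univ_three, halfRule, ← add_div, ← Nat.cast_add, halfTable_sum]
    norm_num
  · obtain ⟨h0, h1, h2⟩ := halfTable_monotone
    unfold halfRule
    gcongr
    fin_cases i <;> simp [h0, h1, h2, hab.le]

lemma eq_half_of_tightAt_halfRule {x : Fin 3 → (Fin 3 → Fin 3) → ℝ} (hx : InT x)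
    (h : TightAt halfRule x) {i a b c : Fin 3} (hv : halfTable i a b c = 1) :
    x i ![a, b, c] = 1 / 2 := by
  have zero : ∀ i a b c, halfTable i a b c = 0 → x i ![a, b, c] = 0 :=
    fun i a b c hv => h.1 i _ (by simp [halfRule, hv])
  have sum : ∀ a b c, x 0 ![a, b, c] + x 1 ![a, b, c] + x 2 ![a, b, c] = 1 :=
    fun a b c => by simpa [Fin.sum_univ_three] using hx.2.1 ![a, b, c]
  have step : ∀ i (s s' : Fin 3 → Fin 3), s i < s' i → Function.update s i (s' i) = s' →
      halfTable i (s 0) (s 1) (s 2) = halfTable i (s' 0) (s' 1) (s' 2) → x i s = x i s' :=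
    fun i s s' hlt hs' hv => h.eq_of_update hlt hs' (by simp only [halfRule, hv])
  -- The odd cycle: x₀(000), x₁(000), x₁(010), x₀(010), x₀(110), x₂(110), x₂(111), x₀(111),
  -- x₀(211), x₁(211), x₁(201), x₂(201), x₂(200), x₀(200), back to x₀(000).
  have cycle₁ := step 1 ![0, 0, 0] ![0, 1, 0] (by decide) (by decide) (by decide)
  have cycle₂ := step 0 ![0, 1, 0] ![1, 1, 0] (by decide) (by decide) (by decide)
  have cycle₃ := step 2 ![1, 1, 0] ![1, 1, 1] (by decide) (by decide) (by decide)
  have cycle₄ := step 0 ![1, 1, 1] ![2, 1, 1] (by decide) (by decide) (by decide)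
  have cycle₅ := step 1 ![2, 0, 1] ![2, 1, 1] (by decide) (by decide) (by decide)
  have cycle₆ := step 2 ![2, 0, 0] ![2, 0, 1] (by decide) (by decide) (by decide)
  have cycle₇ := step 0 ![0, 0, 0] ![2, 0, 0] (by decide) (by decide) (by decide)
  have branch := step 0 ![0, 0, 0] ![1, 0, 0] (by decide) (by decide) (by decide)
  have hmem := halfTable_eq_one i a b c hv
  simp only [List.mem_cons, Prod.mk.injEq, List.not_mem_nil, or_false] at hmem
  rcases hmem with ⟨rfl, rfl, rfl, rfl⟩ | ⟨rfl, rfl, rfl, rfl⟩ | ⟨rfl, rfl, rfl, rfl⟩ |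
    ⟨rfl, rfl, rfl, rfl⟩ | ⟨rfl, rfl, rfl, rfl⟩ | ⟨rfl, rfl, rfl, rfl⟩ | ⟨rfl, rfl, rfl, rfl⟩ |
    ⟨rfl, rfl, rfl, rfl⟩ | ⟨rfl, rfl, rfl, rfl⟩ | ⟨rfl, rfl, rfl, rfl⟩ | ⟨rfl, rfl, rfl, rfl⟩ |
    ⟨rfl, rfl, rfl, rfl⟩ | ⟨rfl, rfl, rfl, rfl⟩ | ⟨rfl, rfl, rfl, rfl⟩ | ⟨rfl, rfl, rfl, rfl⟩ |
    ⟨rfl, rfl, rfl, rfl⟩ <;>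
  linarith [sum 0 0 0, sum 0 1 0, sum 1 0 0, sum 1 1 0, sum 1 1 1, sum 2 0 0, sum 2 1 1,
    sum 2 0 1, zero 2 0 0 0 rfl, zero 2 0 1 0 rfl, zero 1 1 0 0 rfl, zero 1 1 1 0 rfl,
    zero 1 1 1 1 rfl, zero 1 2 0 0 rfl, zero 2 2 1 1 rfl, zero 0 2 0 1 rfl]

lemma eq_halfRule_of_tightAt {x : Fin 3 → (Fin 3 → Fin 3) → ℝ} (hx : InT x)
    (h : TightAt halfRule x) : x = halfRule := by
  funext i s
  obtain ⟨a, b, c, rfl⟩ : ∃ a b c, s = ![a, b, c] :=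
    ⟨s 0, s 1, s 2, by funext j; fin_cases j <;> rfl⟩
  show x i ![a, b, c] = halfTable i a b c / 2
  have := halfTable_le_two i a b c
  interval_cases hv : halfTable i a b c
  · rw [h.1 i _ (by simp [halfRule, hv])]
    norm_num
  · rw [eq_half_of_tightAt_halfRule hx h hv]
    norm_num
  · rw [h.2.1 i _ (by simp [halfRule, hv])]
    norm_num

theorem stmt8 (n k : ℕ) (hn : 3 ≤ n) (hk : 3 ≤ k) :
    ∃ y ∈ Set.extremePoints ℝ {x : Fin n → (Fin n → Fin k) → ℝ | InT x},
      ∃ i s, 0 < y i s ∧ y i s < 1 := by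
  have hextreme : lift hn halfRule ∈ Set.extremePoints ℝ {x | InT x} :=
    mem_extremePoints_of_forall_tightAt (inT_halfRule.lift hn)
      fun _ hx hxy => eq_lift_of_tightAt hn hk (fun _ => eq_halfRule_of_tightAt) hx hxy
  have hhalf : lift hn halfRule (Fin.castLE hn 0) (fun _ => Fin.castLE hk 0) = 1 / 2 := by
    rw [lift_castLE]
    simp [halfRule, clamp, halfTable]
  refine ⟨lift hn halfRule, hextreme, Fin.castLE hn 0, fun _ => Fin.castLE hk 0, ?_⟩
  norm_num [hhalf]

end Stmt8
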